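/- arXiv:2605.07772 — 2 statements merged into one kernel-verified Lean document; each statement's English description precedes it below -/
import Mathlib

section
/- There exist constants C > 0 and ε₀ ∈ (0,1) such that for every 0 < ε < ε₀, the infimum m_ε of E_{ε,A} over Borel probability measures on S satisfies m_ε ≤ −(1/2)·e^{λ_1} + C·ε·log(1/ε). -/
/-!
Test the free energy on `ω[|B]`, the normalised restriction of `ω` to the cap `B` of radius `ε`
around `e₁`. Its entropy is `log (1 / ω B)`, and cutting the sphere by a cubical grid of mesh
`ε / d` into at most `(5d/ε)^d` cells of diameter `≤ ε` shows, by pigeonhole and rotation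
invariance, that `ω B ≥ (ε / 5d)^d`; so `ε · Ent = O(ε log (1/ε))`. On `B × B` the exponent
`⟨x, A y⟩` differs from `λ₁` by at most `2 ε ∑ |λᵢ|`, so `I_A(ω[|B]) ≥ e^{λ₁} (1 - O(ε))`.
-/

open MeasureTheory Real Filter Topology

noncomputable section

/-- The unit sphere `S = 𝕊^{d-1}` in `ℝ^d`. -/
abbrev Sph (d : ℕ) : Type := Metric.sphere (0 : EuclideanSpace ℝ (Fin d)) 1

variable {d : ℕ}

/-- The bilinear form `⟨x, A y⟩` for the diagonal matrix `A = diag lam`. -/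
def qA (lam : Fin d → ℝ) (x y : EuclideanSpace ℝ (Fin d)) : ℝ :=
  ∑ i, lam i * x i * y i

/-- The interaction kernel `K_A(x,y) = exp ⟨x, A y⟩`. -/
def Kker (lam : Fin d → ℝ) (x y : Sph d) : ℝ :=
  Real.exp (qA lam (x : EuclideanSpace ℝ (Fin d)) (y : EuclideanSpace ℝ (Fin d)))

/-- The interaction energy `I_A(μ)`. -/
def IA (lam : Fin d → ℝ) (μ : Measure (Sph d)) : ℝ :=
  ∫ x, ∫ y, Kker lam x y ∂μ ∂μ

/-- The potential `W_μ(x) = ∫ K_A(x,y) dμ(y)`. -/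
def WA (lam : Fin d → ℝ) (μ : Measure (Sph d)) (x : Sph d) : ℝ :=
  ∫ y, Kker lam x y ∂μ

open scoped Classical in
/-- Relative entropy of `μ` with respect to `ω`, with value `+∞` when `μ` is not
absolutely continuous w.r.t. `ω` or the entropy integral diverges. -/
def Ent (ω μ : Measure (Sph d)) : EReal :=
  if μ ≪ ω ∧ Integrable (fun x => Real.log (μ.rnDeriv ω x).toReal) μ
  then ((∫ x, Real.log (μ.rnDeriv ω x).toReal ∂μ : ℝ) : EReal)
  else ⊤

/-- The free energy `E_{ε,A}(μ) = ε·Ent(μ) − (1/2)·I_A(μ)`. -/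
def EA (lam : Fin d → ℝ) (ω : Measure (Sph d)) (ε : ℝ) (μ : Measure (Sph d)) : EReal :=
  (ε : EReal) * Ent ω μ - ((IA lam μ / 2 : ℝ) : EReal)

/-- The antipodal map on the sphere. -/
def antip (x : Sph d) : Sph d :=
  ⟨-(x : EuclideanSpace ℝ (Fin d)), by
    have hx := x.2
    rw [mem_sphere_zero_iff_norm] at hx ⊢
    rwa [norm_neg]⟩

/-- The sphere self-map induced by a linear isometry equivalence of `ℝ^d`. -/
def sphMap (g : EuclideanSpace ℝ (Fin d) ≃ₗᵢ[ℝ] EuclideanSpace ℝ (Fin d)) (x : Sph d) : Sph d :=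
  ⟨g (x : EuclideanSpace ℝ (Fin d)), by
    have hx := x.2
    rw [mem_sphere_zero_iff_norm] at hx ⊢
    rwa [g.norm_map]⟩

/-- `ω` is the uniform probability measure on the sphere, characterised as a
rotation-invariant Borel probability measure. -/
def IsUniform (ω : Measure (Sph d)) : Prop :=
  IsProbabilityMeasure ω ∧
  ∀ g : EuclideanSpace ℝ (Fin d) ≃ₗᵢ[ℝ] EuclideanSpace ℝ (Fin d),
    Measure.map (sphMap g) ω = ω

/-- The (topological) support of a measure. -/
def msupport (μ : Measure (Sph d)) : Set (Sph d) :=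
  {x | ∀ U : Set (Sph d), IsOpen U → x ∈ U → 0 < μ U}

/-- The set of global maximizers of the potential `W_ν`. -/
def argmaxW (lam : Fin d → ℝ) (ν : Measure (Sph d)) : Set (Sph d) :=
  {x | ∀ y, WA lam ν y ≤ WA lam ν x}

/-- `μ` is a Gibbs critical point of `E_{ε,A}`. -/
def IsGibbs (lam : Fin d → ℝ) (ω : Measure (Sph d)) (ε : ℝ) (μ : Measure (Sph d)) : Prop :=
  IsProbabilityMeasure μ ∧
  μ = ω.withDensity (fun x => ENNReal.ofReal
    (Real.exp (WA lam μ x / ε) / ∫ z, Real.exp (WA lam μ z / ε) ∂ω))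

/-- `μ` is a global minimizer of `E_{ε,A}` over Borel probability measures. -/
def IsMinimizer (lam : Fin d → ℝ) (ω : Measure (Sph d)) (ε : ℝ) (μ : Measure (Sph d)) : Prop :=
  IsProbabilityMeasure μ ∧
  ∀ ν : Measure (Sph d), IsProbabilityMeasure ν → EA lam ω ε μ ≤ EA lam ω ε ν

/-- `m_ε`, the infimum of the free energy over probability measures. -/
def mEps (lam : Fin d → ℝ) (ω : Measure (Sph d)) (ε : ℝ) : EReal :=
  sInf {r : EReal | ∃ μ : Measure (Sph d), IsProbabilityMeasure μ ∧ EA lam ω ε μ = r}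

open scoped Finset
open ProbabilityTheory

section Bilinear

variable (lam : Fin d → ℝ)

lemma qA_sub_left (x x' y : EuclideanSpace ℝ (Fin d)) :
    qA lam (x - x') y = qA lam x y - qA lam x' y := by
  simp only [qA, PiLp.sub_apply, mul_sub, sub_mul, Finset.sum_sub_distrib]

lemma qA_sub_right (x y y' : EuclideanSpace ℝ (Fin d)) :
    qA lam x (y - y') = qA lam x y - qA lam x y' := by
  simp only [qA, PiLp.sub_apply, mul_sub, Finset.sum_sub_distrib]

lemma qA_single_single (i : Fin d) :
    qA lam (EuclideanSpace.single i 1) (EuclideanSpace.single i 1) = lam i := by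
  simp [qA]

lemma abs_qA_le (x y : EuclideanSpace ℝ (Fin d)) :
    |qA lam x y| ≤ (∑ i, |lam i|) * ‖x‖ * ‖y‖ := by
  rw [Finset.sum_mul, Finset.sum_mul]
  refine (Finset.abs_sum_le_sum_abs _ _).trans (Finset.sum_le_sum fun i _ => ?_)
  rw [abs_mul, abs_mul]
  gcongr
  · exact PiLp.norm_apply_le x i
  · exact PiLp.norm_apply_le y i

lemma qA_ge_of_norm_sub_le {p x y : EuclideanSpace ℝ (Fin d)} {r : ℝ} (hp : ‖p‖ = 1)
    (hy : ‖y‖ = 1) (hxp : ‖x - p‖ ≤ r) (hyp : ‖y - p‖ ≤ r) :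
    qA lam p p - 2 * (∑ i, |lam i|) * r ≤ qA lam x y := by
  have hsplit : qA lam x y - qA lam p p = qA lam (x - p) y + qA lam p (y - p) := by
    rw [qA_sub_left, qA_sub_right]; ring
  have h1 := abs_qA_le lam (x - p) y
  have h2 := abs_qA_le lam p (y - p)
  rw [hy] at h1
  rw [hp] at h2
  have hΛ : 0 ≤ ∑ i, |lam i| := Finset.sum_nonneg fun i _ => abs_nonneg _
  have h1' : |qA lam (x - p) y| ≤ (∑ i, |lam i|) * r := by nlinarith
  have h2' : |qA lam p (y - p)| ≤ (∑ i, |lam i|) * r := by nlinarith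
  linarith [neg_abs_le (qA lam (x - p) y), neg_abs_le (qA lam p (y - p))]

end Bilinear

lemma Kker_ge_of_mem_closedBall (lam : Fin d → ℝ) {p x y : Sph d} {r : ℝ}
    (hx : x ∈ Metric.closedBall p r) (hy : y ∈ Metric.closedBall p r) :
    Real.exp (qA lam p p - 2 * (∑ i, |lam i|) * r) ≤ Kker lam x y := by
  rw [Metric.mem_closedBall, Subtype.dist_eq, dist_eq_norm] at hx hy
  exact Real.exp_le_exp.2 <|
    qA_ge_of_norm_sub_le lam (norm_eq_of_mem_sphere p) (norm_eq_of_mem_sphere y) hx hy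

lemma continuous_Kker (lam : Fin d → ℝ) : Continuous (Function.uncurry (Kker lam)) := by
  have hcoord (i : Fin d) : Continuous fun x : Sph d => (x : EuclideanSpace ℝ (Fin d)) i :=
    (EuclideanSpace.proj i).continuous.comp continuous_subtype_val
  unfold Function.uncurry Kker qA
  fun_prop

lemma le_IA_of_ae_mem (lam : Fin d → ℝ) {μ : Measure (Sph d)} [IsProbabilityMeasure μ]
    {s : Set (Sph d)} (hs : ∀ᵐ x ∂μ, x ∈ s) {b : ℝ}
    (hb : ∀ x ∈ s, ∀ y ∈ s, b ≤ Kker lam x y) : b ≤ IA lam μ := by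
  have hint {f : Sph d → ℝ} (hf : Continuous f) : Integrable f μ :=
    hf.integrable_of_hasCompactSupport (.of_compactSpace f)
  have hW : Continuous (WA lam μ) := by
    have := continuous_parametric_integral_of_continuous (μ := μ) (continuous_Kker lam)
      isCompact_univ
    rwa [Measure.restrict_univ] at this
  have hWb : ∀ᵐ x ∂μ, b ≤ WA lam μ x := by
    filter_upwards [hs] with x hx
    have := integral_mono_ae (integrable_const b)
      (hint ((continuous_Kker lam).comp (Continuous.prodMk_right x)))
      (hs.mono fun y hy => hb x hx y hy)
    rwa [integral_const, probReal_univ, one_smul] at this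
  have := integral_mono_ae (integrable_const b) (hint hW) hWb
  rwa [integral_const, probReal_univ, one_smul] at this

lemma cond_eq_withDensity {α : Type*} [MeasurableSpace α] (μ : Measure α) {s : Set α}
    (hs : MeasurableSet s) : μ[|s] = μ.withDensity (s.indicator fun _ => (μ s)⁻¹) := by
  rw [withDensity_indicator hs, withDensity_const]
  rfl

lemma Ent_cond {ω : Measure (Sph d)} [IsFiniteMeasure ω] {s : Set (Sph d)}
    (hs : MeasurableSet s) (h0 : ω s ≠ 0) :
    Ent ω ω[|s] = ((Real.log (ω.real s)⁻¹ : ℝ) : EReal) := by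
  have := cond_isProbabilityMeasure (μ := ω) h0
  have hac : ω[|s] ≪ ω := cond_absolutelyContinuous
  have hlog : (fun x => Real.log ((ω[|s]).rnDeriv ω x).toReal) =ᵐ[ω[|s]]
      fun _ => Real.log (ω.real s)⁻¹ := by
    have hrn := Measure.rnDeriv_withDensity ω
      (measurable_const.indicator hs : Measurable (s.indicator fun _ => (ω s)⁻¹))
    rw [← cond_eq_withDensity ω hs] at hrn
    filter_upwards [hac.ae_le hrn, ae_cond_mem hs] with x hx hxs
    rw [hx, Set.indicator_of_mem hxs, ENNReal.toReal_inv, measureReal_def]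
  rw [Ent, if_pos ⟨hac, (integrable_const _).congr hlog.symm⟩, integral_congr_ae hlog,
    integral_const, probReal_univ, one_smul]

lemma measure_closedBall_eq_of_isUniform {ω : Measure (Sph d)} (hω : IsUniform ω)
    (p q : Sph d) (r : ℝ) : ω (Metric.closedBall p r) = ω (Metric.closedBall q r) := by
  set g := (Submodule.span ℝ {(p : EuclideanSpace ℝ (Fin d)) - q})ᗮ.reflection
  have hgp : g p = q := Submodule.reflection_sub <| by
    rw [norm_eq_of_mem_sphere p, norm_eq_of_mem_sphere q]
  have hpre : sphMap g ⁻¹' Metric.closedBall q r = Metric.closedBall p r := by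
    ext x
    simp only [Set.mem_preimage, Metric.mem_closedBall, Subtype.dist_eq, sphMap, dist_eq_norm,
      ← hgp, ← map_sub, LinearIsometryEquiv.norm_map]
  have hmeas : Measurable (sphMap g) :=
    (g.continuous.comp continuous_subtype_val).subtype_mk _ |>.measurable
  rw [← hpre, ← Measure.map_apply hmeas Metric.isClosed_closedBall.measurableSet, hω.2 g]

lemma exists_inv_card_le_measureReal_preimage {α ι : Type*} [MeasurableSpace α]
    (μ : Measure α) [IsProbabilityMeasure μ] (f : α → ι) (F : Finset ι) (hf : ∀ x, f x ∈ F) :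
    ∃ v ∈ F, (#F : ℝ)⁻¹ ≤ μ.real (f ⁻¹' {v}) := by
  obtain ⟨x⟩ := nonempty_of_isProbabilityMeasure μ
  have hF : F.Nonempty := ⟨f x, hf x⟩
  refine Finset.exists_le_of_sum_le hF ?_
  have hcover : (⋃ v ∈ F, f ⁻¹' {v}) = Set.univ :=
    Set.eq_univ_of_forall fun x => Set.mem_biUnion (hf x) rfl
  calc ∑ _ ∈ F, (#F : ℝ)⁻¹ = μ.real (⋃ v ∈ F, f ⁻¹' {v}) := by
        rw [Finset.sum_const, nsmul_eq_mul, mul_inv_cancel₀ (by simpa using hF.ne_empty),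
          hcover, probReal_univ]
    _ ≤ _ := measureReal_biUnion_finset_le F _

def gridIndex (s : ℝ) (x : Sph d) : Fin d → ℤ :=
  fun i => ⌊(x : EuclideanSpace ℝ (Fin d)) i / s⌋

lemma gridIndex_mem {s : ℝ} (hs : 0 < s) (x : Sph d) :
    gridIndex s x ∈ Fintype.piFinset fun _ => Finset.Icc (-(⌈s⁻¹⌉₊ : ℤ)) ⌈s⁻¹⌉₊ := by
  rw [Fintype.mem_piFinset]
  intro i
  have hxi : |(x : EuclideanSpace ℝ (Fin d)) i| ≤ 1 := by
    simpa [norm_eq_of_mem_sphere x] using PiLp.norm_apply_le (x : EuclideanSpace ℝ (Fin d)) i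
  have hb : |(x : EuclideanSpace ℝ (Fin d)) i / s| ≤ ⌈s⁻¹⌉₊ := by
    rw [abs_div, abs_of_pos hs, div_le_iff₀ hs]
    calc _ ≤ 1 := hxi
      _ = s⁻¹ * s := (inv_mul_cancel₀ hs.ne').symm
      _ ≤ _ := by gcongr; exact Nat.le_ceil _
  obtain ⟨hlo, hhi⟩ := abs_le.1 hb
  rw [Finset.mem_Icc, gridIndex, Int.le_floor, Int.floor_le_iff]
  push_cast
  constructor <;> linarith

lemma dist_le_of_gridIndex_eq {s : ℝ} (hs : 0 < s) {x y : Sph d}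
    (h : gridIndex s x = gridIndex s y) : dist x y ≤ √d * s := by
  have hcoord (i : Fin d) :
      dist ((x : EuclideanSpace ℝ (Fin d)) i) ((y : EuclideanSpace ℝ (Fin d)) i) ^ 2 ≤ s ^ 2 := by
    have := Int.abs_sub_lt_one_of_floor_eq_floor (congrFun h i)
    rw [div_sub_div_same, abs_div, abs_of_pos hs, div_lt_one hs] at this
    rw [Real.dist_eq]
    exact pow_le_pow_left₀ (abs_nonneg _) this.le 2
  calc dist x y = √(∑ i, dist ((x : EuclideanSpace ℝ (Fin d)) i)
        ((y : EuclideanSpace ℝ (Fin d)) i) ^ 2) := EuclideanSpace.dist_eq _ _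
    _ ≤ √(∑ _ : Fin d, s ^ 2) := Real.sqrt_le_sqrt (Finset.sum_le_sum fun i _ => hcoord i)
    _ = √d * s := by simp [Real.sqrt_sq hs.le]

lemma pow_le_measureReal_closedBall (hd : 0 < d) {ω : Measure (Sph d)} (hω : IsUniform ω)
    (p : Sph d) {r : ℝ} (hr0 : 0 < r) (hr1 : r ≤ 1) :
    (r / (5 * d)) ^ d ≤ ω.real (Metric.closedBall p r) := by
  have := hω.1
  have hd1 : (1 : ℝ) ≤ d := by exact_mod_cast hd
  set s := r / d
  have hs : 0 < s := by positivity
  set N := ⌈s⁻¹⌉₊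
  set F := Fintype.piFinset fun _ : Fin d => Finset.Icc (-(N : ℤ)) N
  obtain ⟨v, hvF, hv⟩ :=
    exists_inv_card_le_measureReal_preimage ω (gridIndex s) F (gridIndex_mem hs)
  have hcard : (#F : ℝ) ≤ (5 * d / r) ^ d := by
    have hN : (N : ℝ) < s⁻¹ + 1 := Nat.ceil_lt_add_one (inv_nonneg.2 hs.le)
    rw [inv_div] at hN
    have hdr : 1 ≤ d / r := by rw [le_div_iff₀ hr0]; linarith
    have h5 : 5 * (d : ℝ) / r = 5 * (d / r) := mul_div_assoc _ _ _
    have hF : #F = (2 * N + 1) ^ d := by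
      simp only [F, Fintype.card_piFinset, Int.card_Icc, Finset.prod_const, Finset.card_univ,
        Fintype.card_fin]
      congr 1
      omega
    rw [hF]
    push_cast
    gcongr
    linarith
  obtain ⟨q, hq⟩ : (gridIndex s ⁻¹' {v}).Nonempty :=
    nonempty_of_measure_ne_zero (μ := ω) fun h =>
      Finset.ne_empty_of_mem hvF (by simpa [Measure.real, h] using hv)
  have hsub : gridIndex s ⁻¹' {v} ⊆ Metric.closedBall q r := fun x hx => by
    have hsqrt : √d ≤ d := Real.sqrt_le_left (by positivity) |>.2 (by nlinarith)
    calc dist x q ≤ √d * s := dist_le_of_gridIndex_eq hs (hx.trans hq.symm)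
      _ ≤ d * s := by gcongr
      _ = r := mul_div_cancel₀ r (by positivity)
  calc (r / (5 * d)) ^ d = ((5 * d / r) ^ d)⁻¹ := by rw [← inv_pow, inv_div]
    _ ≤ (#F : ℝ)⁻¹ := inv_anti₀ (Nat.cast_pos.2 (Finset.card_pos.2 ⟨v, hvF⟩)) hcard
    _ ≤ ω.real (gridIndex s ⁻¹' {v}) := hv
    _ ≤ ω.real (Metric.closedBall q r) := measureReal_mono hsub
    _ = ω.real (Metric.closedBall p r) := by
      simp only [Measure.real, measure_closedBall_eq_of_isUniform hω q p]

lemma mEps_le_of_closedBall (hd : 0 < d) (lam : Fin d → ℝ) {ω : Measure (Sph d)}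
    (hω : IsUniform ω) (p : Sph d) {ε r : ℝ} (hε : 0 ≤ ε) (hr0 : 0 < r) (hr1 : r ≤ 1) :
    mEps lam ω ε ≤ ((ε * (d * Real.log (5 * d / r))
      - Real.exp (qA lam p p - 2 * (∑ i, |lam i|) * r) / 2 : ℝ) : EReal) := by
  have := hω.1
  set B := Metric.closedBall p r
  have hB : MeasurableSet B := Metric.isClosed_closedBall.measurableSet
  have hm := pow_le_measureReal_closedBall hd hω p hr0 hr1
  have hm0 : 0 < ω.real B := lt_of_lt_of_le (by positivity) hm
  have hB0 : ω B ≠ 0 := fun h => hm0.ne' (by simp [Measure.real, h])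
  have hlog : Real.log (ω.real B)⁻¹ ≤ d * Real.log (5 * d / r) := by
    rw [← Real.log_pow]
    refine Real.log_le_log (inv_pos.2 hm0) ?_
    calc (ω.real B)⁻¹ ≤ ((r / (5 * d)) ^ d)⁻¹ := inv_anti₀ (by positivity) hm
      _ = (5 * d / r) ^ d := by rw [← inv_pow, inv_div]
  have := cond_isProbabilityMeasure hB0
  have hI := le_IA_of_ae_mem lam (ae_cond_mem (μ := ω) hB) fun x hx y hy =>
    Kker_ge_of_mem_closedBall lam hx hy
  calc mEps lam ω ε ≤ EA lam ω ε ω[|B] := sInf_le ⟨_, this, rfl⟩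
    _ = ((ε * Real.log (ω.real B)⁻¹ - IA lam ω[|B] / 2 : ℝ) : EReal) := by
      rw [EA, Ent_cond hB hB0, ← EReal.coe_mul, ← EReal.coe_sub]
    _ ≤ _ := EReal.coe_le_coe_iff.2 (by gcongr)

lemma sub_le_neg_half_exp_add_mul_log {D a Λ ε : ℝ} (hD : 1 ≤ D) (hΛ : 0 ≤ Λ) (hε : 0 < ε)
    (hε1 : ε < Real.exp (-1)) :
    ε * (D * Real.log (5 * D / ε)) - Real.exp (a - 2 * Λ * ε) / 2 ≤
      -(1 / 2) * Real.exp a +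
        (D * Real.log (5 * D) + D + Real.exp a * Λ) * ε * Real.log (1 / ε) := by
  have hL : 1 ≤ Real.log (1 / ε) := by
    have := (Real.log_lt_iff_lt_exp hε).2 hε1
    rw [one_div, Real.log_inv]
    linarith
  set L := Real.log (1 / ε)
  have hsplit : Real.log (5 * D / ε) = Real.log (5 * D) + L := by
    rw [div_eq_mul_one_div, Real.log_mul (by positivity) (by positivity)]
  have hexp : Real.exp a * (1 - 2 * Λ * ε) ≤ Real.exp (a - 2 * Λ * ε) := by
    rw [sub_eq_add_neg a, Real.exp_add]
    gcongr
    linarith [Real.add_one_le_exp (-(2 * Λ * ε))]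
  have h1 : 0 ≤ D * Real.log (5 * D) * ε * (L - 1) :=
    mul_nonneg (by have := Real.log_nonneg (by linarith : (1 : ℝ) ≤ 5 * D); positivity)
      (by linarith)
  have h2 : 0 ≤ Real.exp a * Λ * ε * (L - 1) := mul_nonneg (by positivity) (by linarith)
  rw [hsplit]
  nlinarith

/-- upper bound on the minimal free energy `m_ε`. -/
theorem stmt11 (d : ℕ) (hd : 2 ≤ d) (lam : Fin d → ℝ)
    (ω : Measure (Sph d)) (hω : IsUniform ω) :
    ∃ C : ℝ, 0 < C ∧ ∃ ε₀ : ℝ, 0 < ε₀ ∧ ε₀ < 1 ∧ ∀ ε : ℝ, 0 < ε → ε < ε₀ →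
      mEps lam ω ε ≤
        ((-(1 / 2) * Real.exp (lam ⟨0, by omega⟩) + C * ε * Real.log (1 / ε) : ℝ) : EReal) := by
  have hd1 : (1 : ℝ) ≤ d := by exact_mod_cast (by omega : 1 ≤ d)
  set i₀ : Fin d := ⟨0, by omega⟩
  set Λ := ∑ i, |lam i|
  have hΛ : 0 ≤ Λ := Finset.sum_nonneg fun i _ => abs_nonneg _
  have hlog : 0 ≤ Real.log (5 * d) := Real.log_nonneg (by linarith)
  let e : Sph d := ⟨EuclideanSpace.single i₀ 1, by simp⟩
  refine ⟨d * Real.log (5 * d) + d + Real.exp (lam i₀) * Λ, by positivity, Real.exp (-1),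
    Real.exp_pos _, Real.exp_lt_one_iff.2 (by norm_num), fun ε hε hε₀ => ?_⟩
  have hε1 : ε ≤ 1 := (hε₀.trans (Real.exp_lt_one_iff.2 (by norm_num))).le
  calc mEps lam ω ε ≤ ((ε * (d * Real.log (5 * d / ε))
        - Real.exp (qA lam e e - 2 * Λ * ε) / 2 : ℝ) : EReal) :=
      mEps_le_of_closedBall (by omega) lam hω e hε.le hε hε1
    _ ≤ _ := by
      rw [EReal.coe_le_coe_iff, qA_single_single]
      exact sub_le_neg_half_exp_add_mul_log hd1 hΛ hε hε₀
end
end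

section
/- Fix ε > 0 and let μ̄ = ρ̄ω be a Gibbs critical point of E_{ε,A}, i.e., ρ̄(x) = exp(W_{μ̄}(x)/ε) / ∫_S exp(W_{μ̄}(z)/ε) dω(z) for all x ∈ S. Let h : S → ℝ be a bounded measurable function with ∫_S h dμ̄ = 0 and sup_{x∈S} |h(x)| ≤ 1/2, and let μ := (1+h)μ̄ (a probability measure). Then E_{ε,A}(μ) − E_{ε,A}(μ̄) = ε·∫_S [(1+h)·log(1+h) − h] dμ̄ − (1/2)·∬_{S×S} K_A(x,y) h(x) h(y) dμ̄(x) dμ̄(y). -/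
open MeasureTheory Real Filter Topology

noncomputable section

variable {d : ℕ}

/-!
Relative to `ω`, the measure `μ = (1 + h) μ̄` has density `ρ̄ (1 + h)`, so
`Ent μ = Ent μ̄ + ∫ h log ρ̄ dμ̄ + ∫ (1 + h) log (1 + h) dμ̄`; and since `K_A` is symmetric,
`I_A(μ) = I_A(μ̄) + 2 ∫ h W_μ̄ dμ̄ + ∬ K_A h h dμ̄ dμ̄`. At a Gibbs point
`ε log ρ̄ = W_μ̄ - ε log Z`, so the two terms linear in `h` cancel because `∫ h dμ̄ = 0`, and the
same condition lets `-h` be inserted into the entropy term. Since `|h| ≤ 1/2`, every integrand is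
bounded, hence integrable for the finite measures involved.
-/

lemma abs_log_one_add_le {x b : ℝ} (hb : b < 1) (hx : |x| ≤ b) :
    |Real.log (1 + x)| ≤ -Real.log (1 - b) := by
  obtain ⟨hxl, hxu⟩ := abs_le.1 hx
  have hb0 : 0 < 1 - b := by linarith
  rw [abs_le]
  constructor
  · linarith [Real.log_le_log hb0 (by linarith : 1 - b ≤ 1 + x)]
  · -- `(1 - b)(1 + x) ≤ 1 - b² ≤ 1`
    have hprod : Real.log ((1 - b) * (1 + x)) ≤ 0 :=
      Real.log_nonpos (by nlinarith) (by nlinarith)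
    rwa [Real.log_mul hb0.ne' (by linarith), ← le_neg_iff_add_nonpos_left] at hprod

section WithDensity

variable {α : Type*} [MeasurableSpace α] {μ : Measure α}

lemma integral_withDensity_ofReal {ρ : α → ℝ} (hρ : Measurable ρ) (hρ0 : ∀ x, 0 ≤ ρ x)
    (g : α → ℝ) :
    ∫ x, g x ∂μ.withDensity (fun x => ENNReal.ofReal (ρ x)) = ∫ x, ρ x * g x ∂μ := by
  rw [integral_withDensity_eq_integral_toReal_smul hρ.ennreal_ofReal
    (ae_of_all _ fun _ => ENNReal.ofReal_lt_top)]
  exact integral_congr_ae (ae_of_all _ fun x => by simp [ENNReal.toReal_ofReal (hρ0 x)])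

lemma withDensity_ofReal_withDensity_ofReal {f g : α → ℝ} (hf : Measurable f)
    (hg : Measurable g) (hf0 : ∀ x, 0 ≤ f x) :
    (μ.withDensity fun x => ENNReal.ofReal (f x)).withDensity (fun x => ENNReal.ofReal (g x)) =
      μ.withDensity fun x => ENNReal.ofReal (f x * g x) := by
  rw [← withDensity_mul μ hf.ennreal_ofReal hg.ennreal_ofReal]
  congr 1
  funext x
  simp [ENNReal.ofReal_mul (hf0 x)]

lemma isFiniteMeasure_withDensity_ofReal_of_abs_le [IsFiniteMeasure μ] {f : α → ℝ}
    (hf : Measurable f) {C : ℝ} (hC : ∀ x, |f x| ≤ C) :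
    IsFiniteMeasure (μ.withDensity fun x => ENNReal.ofReal (f x)) :=
  isFiniteMeasure_withDensity_ofReal
    (Integrable.of_bound hf.aestronglyMeasurable C (ae_of_all _ hC)).hasFiniteIntegral

lemma integrable_one_add_mul_log_one_add [IsFiniteMeasure μ] {h : α → ℝ} {b : ℝ}
    (hh : Measurable h) (hb : b < 1) (hhb : ∀ x, |h x| ≤ b) :
    Integrable (fun x => (1 + h x) * Real.log (1 + h x)) μ :=
  (Integrable.of_bound (measurable_const.add hh).log.aestronglyMeasurable _
    (ae_of_all _ fun x => abs_log_one_add_le hb (hhb x))).bdd_mul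
    (by fun_prop) (c := 1 + b) (ae_of_all _ fun x => (abs_add_le _ _).trans (by simp [hhb x]))

lemma mul_integral_mul_log_eq_integral_mul {ρ W h : α → ℝ} {ε c : ℝ}
    (hlog : ∀ x, ε * Real.log (ρ x) = W x - c) (hh : Integrable h μ)
    (hhW : Integrable (fun x => h x * W x) μ) (hmean : ∫ x, h x ∂μ = 0) :
    ε * ∫ x, h x * Real.log (ρ x) ∂μ = ∫ x, h x * W x ∂μ := by
  rw [← integral_const_mul]
  calc ∫ x, ε * (h x * Real.log (ρ x)) ∂μ = ∫ x, (h x * W x - c * h x) ∂μ :=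
        integral_congr_ae (ae_of_all _ fun x => by linear_combination h x * hlog x)
    _ = ∫ x, h x * W x ∂μ := by
        rw [integral_sub hhW (hh.const_mul c), integral_const_mul, hmean, mul_zero, sub_zero]

lemma integral_integral_withDensity_one_add [IsFiniteMeasure μ] {K : α → α → ℝ} {h : α → ℝ}
    {C B : ℝ}
    (hK : Measurable (Function.uncurry K)) (hKC : ∀ x y, |K x y| ≤ C)
    (hKsymm : ∀ x y, K x y = K y x) (hh : Measurable h) (hhB : ∀ x, |h x| ≤ B)
    (h1 : ∀ x, 0 ≤ 1 + h x) :
    ∫ x, ∫ y, K x y ∂μ.withDensity (fun x => ENNReal.ofReal (1 + h x))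
        ∂μ.withDensity (fun x => ENNReal.ofReal (1 + h x)) =
      ∫ x, ∫ y, K x y ∂μ ∂μ + 2 * ∫ x, h x * ∫ y, K x y ∂μ ∂μ +
        ∫ x, ∫ y, K x y * h x * h y ∂μ ∂μ := by
  have hg : Measurable fun x => 1 + h x := by fun_prop
  have iK : Integrable (fun p : α × α => K p.1 p.2) (μ.prod μ) :=
    Integrable.of_bound hK.aestronglyMeasurable C (ae_of_all _ fun p => hKC p.1 p.2)
  have h_mul : ∀ i : α × α → α, Measurable i →
      ∀ {F : α × α → ℝ}, Integrable F (μ.prod μ) → Integrable (fun p => h (i p) * F p) (μ.prod μ) :=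
    fun i hi F hF => hF.bdd_mul (hh.comp hi).aestronglyMeasurable (ae_of_all _ fun p => hhB (i p))
  have i1 := h_mul Prod.fst measurable_fst iK
  have i2 := h_mul Prod.snd measurable_snd iK
  have i12 := h_mul Prod.fst measurable_fst i2
  have iG : Integrable (fun p : α × α => (1 + h p.1) * ((1 + h p.2) * K p.1 p.2)) (μ.prod μ) :=
    (((iK.add i1).add i2).add i12).congr (ae_of_all _ fun p => by simp only [Pi.add_apply]; ring)
  have hswap : ∫ p, h p.2 * K p.1 p.2 ∂μ.prod μ = ∫ p, h p.1 * K p.1 p.2 ∂μ.prod μ := by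
    rw [← integral_prod_swap]
    simp only [Prod.fst_swap, Prod.snd_swap, hKsymm]
  calc _ = ∫ x, ∫ y, (1 + h x) * ((1 + h y) * K x y) ∂μ ∂μ := by
        simp only [integral_withDensity_ofReal hg h1, integral_const_mul]
    _ = ∫ p, (1 + h p.1) * ((1 + h p.2) * K p.1 p.2) ∂μ.prod μ := (integral_prod _ iG).symm
    _ = ∫ p, K p.1 p.2 + h p.1 * K p.1 p.2 + h p.2 * K p.1 p.2 +
          h p.1 * (h p.2 * K p.1 p.2) ∂μ.prod μ :=
        integral_congr_ae (ae_of_all _ fun p => by ring)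
    _ = ∫ p, K p.1 p.2 ∂μ.prod μ + 2 * ∫ p, h p.1 * K p.1 p.2 ∂μ.prod μ +
          ∫ p, h p.1 * (h p.2 * K p.1 p.2) ∂μ.prod μ := by
        rw [integral_add (by fun_prop) i12, integral_add (by fun_prop) i2, integral_add iK i1,
          hswap]
        ring
    _ = _ := by
        rw [integral_prod _ iK, integral_prod _ i1, integral_prod _ i12]
        congr 1
        · simp only [integral_const_mul]
        · exact integral_congr_ae <| ae_of_all _ fun x =>
            integral_congr_ae <| ae_of_all _ fun y => by ring

end WithDensity

section Kernel

variable (lam : Fin d → ℝ)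

lemma abs_coord_le_one (x : Sph d) (i : Fin d) : |(x : EuclideanSpace ℝ (Fin d)) i| ≤ 1 :=
  (PiLp.norm_apply_le (x : EuclideanSpace ℝ (Fin d)) i).trans (norm_eq_of_mem_sphere x).le

lemma Kker_comm (x y : Sph d) : Kker lam x y = Kker lam y x := by
  unfold Kker qA
  congr 1
  exact Finset.sum_congr rfl fun i _ => mul_right_comm _ _ _

lemma abs_Kker_le (x y : Sph d) : |Kker lam x y| ≤ Real.exp (∑ i, |lam i|) := by
  rw [Kker, abs_of_pos (Real.exp_pos _), Real.exp_le_exp, qA]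
  refine Finset.sum_le_sum fun i _ => ?_
  have hxy := mul_le_one₀ (abs_coord_le_one x i) (abs_nonneg _) (abs_coord_le_one y i)
  calc _ ≤ |lam i * (x : EuclideanSpace ℝ (Fin d)) i * (y : EuclideanSpace ℝ (Fin d)) i| :=
        le_abs_self _
    _ = |lam i| * (|(x : EuclideanSpace ℝ (Fin d)) i| * |(y : EuclideanSpace ℝ (Fin d)) i|) := by
        rw [abs_mul, abs_mul, mul_assoc]
    _ ≤ |lam i| := mul_le_of_le_one_right (abs_nonneg _) hxy

lemma continuous_Kker_s17 : Continuous fun p : Sph d × Sph d => Kker lam p.1 p.2 := by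
  unfold Kker qA
  fun_prop

@[fun_prop]
lemma measurable_WA (μ : Measure (Sph d)) [SFinite μ] : Measurable (WA lam μ) :=
  (StronglyMeasurable.integral_prod_right
    (continuous_Kker_s17 lam).measurable.stronglyMeasurable).measurable

lemma abs_WA_le (μ : Measure (Sph d)) [IsProbabilityMeasure μ] (x : Sph d) :
    |WA lam μ x| ≤ Real.exp (∑ i, |lam i|) := by
  simpa [WA] using norm_integral_le_of_norm_le_const (μ := μ) (f := Kker lam x)
    (ae_of_all _ (abs_Kker_le lam x))

lemma integral_exp_WA_div_pos (ω μ : Measure (Sph d)) [IsProbabilityMeasure ω]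
    [IsProbabilityMeasure μ] (ε : ℝ) : 0 < ∫ z, Real.exp (WA lam μ z / ε) ∂ω := by
  refine integral_exp_pos <| Integrable.of_bound (by fun_prop)
    (Real.exp (Real.exp (∑ i, |lam i|) / |ε|)) <| ae_of_all _ fun x => ?_
  rw [Real.norm_of_nonneg (Real.exp_pos _).le, Real.exp_le_exp]
  exact (le_abs_self _).trans (by rw [abs_div]; gcongr; exact abs_WA_le lam μ x)

lemma IA_withDensity_one_add (μ : Measure (Sph d)) [IsFiniteMeasure μ] {h : Sph d → ℝ} {B : ℝ}
    (hh : Measurable h) (hhB : ∀ x, |h x| ≤ B) (h1 : ∀ x, 0 ≤ 1 + h x) :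
    IA lam (μ.withDensity fun x => ENNReal.ofReal (1 + h x)) =
      IA lam μ + 2 * ∫ x, h x * WA lam μ x ∂μ + ∫ x, ∫ y, Kker lam x y * h x * h y ∂μ ∂μ :=
  integral_integral_withDensity_one_add (continuous_Kker_s17 lam).measurable (abs_Kker_le lam)
    (Kker_comm lam) hh hhB h1

end Kernel

section Entropy

variable {ω μ : Measure (Sph d)} [SigmaFinite ω] {ρ : Sph d → ℝ}

lemma Ent_eq_integral_log (hμ : μ = ω.withDensity fun x => ENNReal.ofReal (ρ x))
    (hρ : Measurable ρ) (hρ0 : ∀ x, 0 ≤ ρ x) (hint : Integrable (fun x => Real.log (ρ x)) μ) :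
    Ent ω μ = ((∫ x, Real.log (ρ x) ∂μ : ℝ) : EReal) := by
  have hac : μ ≪ ω := hμ ▸ withDensity_absolutelyContinuous _ _
  have hrn : (fun x => Real.log (μ.rnDeriv ω x).toReal) =ᵐ[μ] fun x => Real.log (ρ x) := by
    have := Measure.rnDeriv_withDensity ω hρ.ennreal_ofReal
    rw [← hμ] at this
    filter_upwards [hac.ae_le this] with x hx
    rw [hx, ENNReal.toReal_ofReal (hρ0 x)]
  rw [Ent, if_pos ⟨hac, hint.congr hrn.symm⟩, integral_congr_ae hrn]

lemma Ent_withDensity_one_add [IsFiniteMeasure μ] {h : Sph d → ℝ} {B b : ℝ}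
    (hμ : μ = ω.withDensity fun x => ENNReal.ofReal (ρ x)) (hρ : Measurable ρ)
    (hρ0 : ∀ x, 0 < ρ x) (hlogρ : ∀ x, |Real.log (ρ x)| ≤ B) (hh : Measurable h) (hb : b < 1)
    (hhb : ∀ x, |h x| ≤ b) :
    Ent ω (μ.withDensity fun x => ENNReal.ofReal (1 + h x)) =
      ((∫ x, Real.log (ρ x) ∂μ + ∫ x, h x * Real.log (ρ x) ∂μ +
        ∫ x, (1 + h x) * Real.log (1 + h x) ∂μ : ℝ) : EReal) := by
  have h1 : ∀ x, 0 < 1 + h x := fun x => by linarith [(abs_le.1 (hhb x)).1]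
  have hg : Measurable fun x => 1 + h x := by fun_prop
  have hL : ∀ x, |Real.log (1 + h x)| ≤ -Real.log (1 - b) := fun x => abs_log_one_add_le hb (hhb x)
  have hℓ : Integrable (fun x => Real.log (ρ x)) μ :=
    Integrable.of_bound hρ.log.aestronglyMeasurable B (ae_of_all _ hlogρ)
  have hhℓ : Integrable (fun x => h x * Real.log (ρ x)) μ :=
    hℓ.bdd_mul hh.aestronglyMeasurable (ae_of_all _ hhb)
  have hhL := integrable_one_add_mul_log_one_add (μ := μ) hh hb hhb
  have := isFiniteMeasure_withDensity_ofReal_of_abs_le (μ := μ) hg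
    (fun x => (abs_add_le _ _).trans (by simp [hhb x]) : ∀ x, |1 + h x| ≤ 1 + b)
  have hlog_mul : ∀ x, Real.log (ρ x * (1 + h x)) = Real.log (ρ x) + Real.log (1 + h x) :=
    fun x => Real.log_mul (hρ0 x).ne' (h1 x).ne'
  rw [Ent_eq_integral_log (ρ := fun x => ρ x * (1 + h x))
      (by rw [hμ, withDensity_ofReal_withDensity_ofReal hρ hg fun x => (hρ0 x).le])
      (hρ.mul hg) (fun x => (mul_pos (hρ0 x) (h1 x)).le)
      (Integrable.of_bound (hρ.mul hg).log.aestronglyMeasurable (B + -Real.log (1 - b))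
        (ae_of_all _ fun x => by
          rw [hlog_mul]; exact (abs_add_le _ _).trans (add_le_add (hlogρ x) (hL x)))),
    integral_withDensity_ofReal hg fun x => (h1 x).le, ← integral_add hℓ hhℓ,
    ← integral_add (by fun_prop) hhL]
  congr 1
  exact integral_congr_ae (ae_of_all _ fun x => by simp only [hlog_mul]; ring)

end Entropy

lemma EA_eq_of_Ent_eq {lam : Fin d → ℝ} {ω μ : Measure (Sph d)} {ε r : ℝ} (h : Ent ω μ = r) :
    EA lam ω ε μ = ((ε * r - IA lam μ / 2 : ℝ) : EReal) := by
  rw [EA, h, ← EReal.coe_mul, ← EReal.coe_sub]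

/-- exact free-energy Taylor expansion in the density chart at a
Gibbs critical point. -/
theorem stmt17 (d : ℕ) (lam : Fin d → ℝ)
    (ω : Measure (Sph d)) (hω : IsUniform ω)
    (ε : ℝ) (hε : 0 < ε)
    (μbar : Measure (Sph d)) (ρbar : Sph d → ℝ)
    (hμbarp : IsProbabilityMeasure μbar)
    (hμbar : μbar = ω.withDensity (fun x => ENNReal.ofReal (ρbar x)))
    (hρbar : ∀ x, ρbar x = Real.exp (WA lam μbar x / ε) / ∫ z, Real.exp (WA lam μbar z / ε) ∂ω)
    (h : Sph d → ℝ) (hmeas : Measurable h)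
    (hmean : (∫ x, h x ∂μbar) = 0)
    (hbd : ∀ x, |h x| ≤ 1 / 2) :
    EA lam ω ε (μbar.withDensity (fun x => ENNReal.ofReal (1 + h x))) - EA lam ω ε μbar =
      ((ε * ∫ x, ((1 + h x) * Real.log (1 + h x) - h x) ∂μbar -
          (1 / 2) * ∫ x, ∫ y, Kker lam x y * h x * h y ∂μbar ∂μbar : ℝ) : EReal) := by
  have := hω.1
  set W := WA lam μbar
  set C := Real.exp (∑ i, |lam i|)
  set Z := ∫ z, Real.exp (W z / ε) ∂ω
  have hW : ∀ x, |W x| ≤ C := abs_WA_le lam μbar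
  have hWm : Measurable W := measurable_WA lam μbar
  have hZ : 0 < Z := integral_exp_WA_div_pos lam ω μbar ε
  have hρm : Measurable ρbar := by
    rw [funext hρbar]
    fun_prop
  have hρpos : ∀ x, 0 < ρbar x := fun x => hρbar x ▸ div_pos (Real.exp_pos _) hZ
  have hlog : ∀ x, ε * Real.log (ρbar x) = W x - ε * Real.log Z := fun x => by
    rw [hρbar x, Real.log_div (Real.exp_pos _).ne' hZ.ne', Real.log_exp]
    field_simp
  have hlogρ : ∀ x, |Real.log (ρbar x)| ≤ (C + |ε * Real.log Z|) / ε := fun x => by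
    rw [le_div_iff₀ hε]
    calc |Real.log (ρbar x)| * ε = |W x - ε * Real.log Z| := by
          rw [← hlog, abs_mul, abs_of_pos hε, mul_comm]
      _ ≤ C + |ε * Real.log Z| := (abs_sub _ _).trans (add_le_add_left (hW x) _)
  have hℓ : Integrable (fun x => Real.log (ρbar x)) μbar :=
    Integrable.of_bound hρm.log.aestronglyMeasurable _ (ae_of_all _ hlogρ)
  have hh : Integrable h μbar := Integrable.of_bound hmeas.aestronglyMeasurable _ (ae_of_all _ hbd)
  have hcrit : ε * ∫ x, h x * Real.log (ρbar x) ∂μbar = ∫ x, h x * W x ∂μbar :=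
    mul_integral_mul_log_eq_integral_mul hlog hh
      ((Integrable.of_bound hWm.aestronglyMeasurable C (ae_of_all _ hW)).bdd_mul
        hmeas.aestronglyMeasurable (ae_of_all _ hbd)) hmean
  rw [EA_eq_of_Ent_eq (Ent_withDensity_one_add hμbar hρm hρpos hlogρ hmeas (by norm_num) hbd),
    EA_eq_of_Ent_eq (Ent_eq_integral_log hμbar hρm (fun x => (hρpos x).le) hℓ), ← EReal.coe_sub,
    IA_withDensity_one_add lam μbar hmeas hbd (fun x => by linarith [(abs_le.1 (hbd x)).1]),
    integral_sub (integrable_one_add_mul_log_one_add hmeas (by norm_num) hbd) hh, hmean,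
    EReal.coe_eq_coe_iff]
  linear_combination hcrit

end
end
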